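/- Suppose a group G admits a presentation with n generators and the relations identify each generator g_i with its image under an endomorphism induced by φ, i.e., G = ⟨x₁,…,x_n | x_i = w_i(x₁,…,x_n), i = 1,…,n⟩ where x_i ↦ w_i defines an endomorphism Φ of the free group F_n. If G is free of rank n, then Φ is an automorphism of F_n whose induced map on G is the identity. -/

import Mathlib

/-!
The quotient map `F_n → G` identifies `Φ` with the identity, since it kills every relator
`xᵢ⁻¹ Φ(xᵢ)`. Composed with an isomorphism `G ≃ F_n` it is a surjective endomorphism of `F_n`,
and finitely generated residually finite groups are Hopfian: a surjective `f` induces an injection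
`ψ ↦ ψ ∘ f` of the finite set `Hom(F_n, Q)` for every finite `Q`, hence a bijection, so any
`π : F_n → Q` factors through `f` and cannot separate an element of `ker f` from `1`. Thus the
quotient map is injective and `Φ = id`. Free groups are residually finite because a reduced word
`w` of length `k` is realised by permutations of `{0, …, k}` making `w` walk from `k` to `0`:
reducedness is exactly what makes each generator's prescribed moves a partial injection.
-/

namespace FreeGroup

variable {α : Type*} {L : List (α × Bool)}

theorem IsReduced.snd_eq_of_fst_eq (hL : IsReduced L) {i j : Fin L.length}
    (hij : i.val + 1 = j.val) (hfst : L[i].1 = L[j].1) : L[i].2 = L[j].2 := by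
  have := hL.getElem i (by omega)
  simp only [Fin.getElem_fin, hij] at this hfst ⊢
  exact this hfst

variable (L) in
/-- Letter `i` of `L` labels the edge between `i` and `i + 1` of the path `0 — 1 — ⋯ — |L|`.
Its generator should move `letterEnd L true i` to `letterEnd L false i`, so that reading `L`
from right to left walks from `|L|` down to `0`. -/
def letterEnd (b : Bool) (i : Fin L.length) : Fin (L.length + 1) :=
  if L[i].2 = b then i.succ else i.castSucc

theorem IsReduced.letterEnd_injective (hL : IsReduced L) (b : Bool) (a : α) :
    Function.Injective fun i : {i : Fin L.length // L[i].1 = a} => letterEnd L b i := by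
  rintro ⟨i, hi⟩ ⟨j, hj⟩ h
  have hij := fun h => hL.snd_eq_of_fst_eq (i := i) (j := j) h (hi.trans hj.symm)
  have hji := fun h => hL.snd_eq_of_fst_eq (i := j) (j := i) h (hj.trans hi.symm)
  simp only [letterEnd, Subtype.mk.injEq, Fin.ext_iff] at h ⊢
  split_ifs at h <;> simp only [Fin.val_succ, Fin.val_castSucc] at h <;> grind

theorem IsReduced.exists_perm_walk (hL : IsReduced L) :
    ∃ σ : α → Equiv.Perm (Fin (L.length + 1)),
      ∀ i : Fin L.length, cond L[i].2 (σ L[i].1) (σ L[i].1)⁻¹ i.succ = i.castSucc := by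
  choose σ hσ using fun a => Equiv.Perm.exists_extending_pair _ _
    (hL.letterEnd_injective true a) (hL.letterEnd_injective false a)
  refine ⟨σ, fun i => ?_⟩
  have := hσ L[i].1 ⟨i, rfl⟩
  cases h : L[(i : ℕ)].2 <;>
    simp only [Fin.getElem_fin, letterEnd, h, Bool.false_eq_true, Bool.true_eq_false, reduceIte,
      cond_false, cond_true, Equiv.Perm.coe_inv] at this ⊢
  · rw [Equiv.symm_apply_eq, this]
  · exact this

theorem lift_mk_apply_last {σ : α → Equiv.Perm (Fin (L.length + 1))}
    (hσ : ∀ i : Fin L.length, cond L[i].2 (σ L[i].1) (σ L[i].1)⁻¹ i.succ = i.castSucc) :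
    lift σ (mk L) (Fin.last _) = 0 := by
  have walk : ∀ i (hi : i ≤ L.length),
      ((L.drop i).map fun x => cond x.2 (σ x.1) (σ x.1)⁻¹).prod (Fin.last _) =
        ⟨i, by omega⟩ := by
    intro i hi
    induction hi using Nat.decreasingInduction with
    | self => simp [Fin.last]
    | of_succ i hi ih =>
      rw [List.drop_eq_getElem_cons hi, List.map_cons, List.prod_cons, Equiv.Perm.mul_apply, ih]
      exact hσ ⟨i, hi⟩
  simpa using walk 0 (Nat.zero_le _)

theorem exists_finite_monoidHom_ne_one {w : FreeGroup α} (hw : w ≠ 1) :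
    ∃ (H : Type) (_ : Group H) (_ : Finite H) (f : FreeGroup α →* H), f w ≠ 1 := by
  classical
  obtain ⟨σ, hσ⟩ := (isReduced_toWord (x := w)).exists_perm_walk
  refine ⟨_, inferInstance, inferInstance, lift σ, fun h => ?_⟩
  have hlast := lift_mk_apply_last hσ
  rw [mk_toWord, h, Equiv.Perm.one_apply, Fin.last_eq_zero_iff, List.length_eq_zero_iff,
    toWord_eq_nil_iff] at hlast
  exact hw hlast

instance : Group.ResiduallyFinite (FreeGroup α) :=
  Group.residuallyFinite_of_forall_exists_finite_monoidHom fun _ => exists_finite_monoidHom_ne_one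

theorem mk'_comp_eq_mk' {N : Subgroup (FreeGroup α)} [N.Normal] {Φ : FreeGroup α →* FreeGroup α}
    (hΦ : ∀ a, (of a)⁻¹ * Φ (of a) ∈ N) : (QuotientGroup.mk' N).comp Φ = QuotientGroup.mk' N :=
  ext_hom _ _ fun a => ((QuotientGroup.eq (s := N)).mpr (hΦ a)).symm

end FreeGroup

namespace Group

variable {G : Type*} [Group G]

theorem FG.finite_monoidHom [FG G] (Q : Type*) [Group Q] [Finite Q] : Finite (G →* Q) := by
  obtain ⟨s, hs⟩ := fg_def.mp ‹FG G›
  refine Finite.of_injective (fun f : G →* Q => fun x : s => f x) fun f g hfg => ?_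
  exact MonoidHom.eq_of_eqOn_dense hs fun x hx => congr_fun hfg ⟨x, hx⟩

theorem ResiduallyFinite.injective_of_surjective [FG G] [ResiduallyFinite G] {f : G →* G}
    (hf : Function.Surjective f) : Function.Injective f := by
  refine (injective_iff_map_eq_one f).mpr fun w hw => by_contra fun hne => ?_
  obtain ⟨H, hwH⟩ := exists_finiteIndexNormalSubgroup_notMem w hne
  have := FG.finite_monoidHom (G := G) (G ⧸ H.toSubgroup)
  obtain ⟨ψ, hψ⟩ := Finite.surjective_of_injective
    (fun _ _ => (MonoidHom.cancel_right hf).mp :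
      Function.Injective fun ψ : G →* G ⧸ H.toSubgroup => ψ.comp f)
    (QuotientGroup.mk' H.toSubgroup)
  refine hwH ((QuotientGroup.eq_one_iff w).mp ?_)
  rw [← QuotientGroup.mk'_apply, ← hψ, MonoidHom.comp_apply, hw, map_one]

end Group

/-- Suppose `G = ⟨x₁,…,x_n ∣ xᵢ = wᵢ(x₁,…,x_n)⟩`, where `xᵢ ↦ wᵢ` defines an
endomorphism `Φ` of the free group `F_n`; that is, `G` is the quotient of `F_n`
by the normal closure of the elements `xᵢ⁻¹ · Φ(xᵢ)`.  If `G` is free of rank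
`n`, then `Φ` is an automorphism of `F_n` and the map induced by `Φ` on `G` is
the identity (i.e. the quotient map coequalizes `Φ` and the identity). -/
theorem presentation_free_of_rank_n_implies_monodromy_trivial
    (n : ℕ) (Φ : FreeGroup (Fin n) →* FreeGroup (Fin n))
    (N : Subgroup (FreeGroup (Fin n)))
    (hN : N = Subgroup.normalClosure
      (Set.range fun i : Fin n => (FreeGroup.of i)⁻¹ * Φ (FreeGroup.of i)))
    (hNnormal : N.Normal)
    (hfree : Nonempty ((FreeGroup (Fin n) ⧸ N) ≃* FreeGroup (Fin n))) :
    Function.Bijective Φ ∧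
      (QuotientGroup.mk' N).comp Φ = QuotientGroup.mk' N := by
  obtain ⟨e⟩ := hfree
  have hcomp : (QuotientGroup.mk' N).comp Φ = QuotientGroup.mk' N :=
    FreeGroup.mk'_comp_eq_mk' fun i => hN ▸ Subgroup.subset_normalClosure ⟨i, rfl⟩
  have hmk : Function.Injective (QuotientGroup.mk' N) :=
    .of_comp (f := e) <| Group.ResiduallyFinite.injective_of_surjective
      (f := e.toMonoidHom.comp (QuotientGroup.mk' N))
      (e.surjective.comp (QuotientGroup.mk'_surjective N))
  have hΦ : Φ = MonoidHom.id _ :=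
    (MonoidHom.cancel_left hmk).mp (by rw [hcomp, MonoidHom.comp_id])
  subst hΦ
  exact ⟨Function.bijective_id, hcomp⟩
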